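/- Let L ≥ M ≥ 1, ρ ≠ 0, let X₀ ∈ ℂ^{M×L} satisfy X₀ X₀ᴴ = ρ I_M (so M = N for this statement, with Y ∈ ℂ^{N×L}, N = M, and Y X₀ᴴ invertible). Then tr( (I_L − (1/ρ) X₀ᴴ X₀) Yᴴ Y X₀ᴴ ( X₀ Yᴴ Y X₀ᴴ )⁻¹ X₀ Yᴴ Y ) = tr( Y (I_L − (1/ρ) X₀ᴴ X₀) Yᴴ ). -/

import Mathlib

open Matrix

/-!
Writing `A = Y X₀ᴴ`, the middle factor `X₀ Yᴴ Y X₀ᴴ` is `Aᴴ A`, and for a square invertible `A`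
the "projection" `A (Aᴴ A)⁻¹ Aᴴ` is the identity. Cycling `Y` to the front of the trace exposes
exactly this factor, leaving `tr(Y P Yᴴ)` for any `P` in place of `I_L − ρ⁻¹ X₀ᴴ X₀`.
-/

theorem Matrix.mul_inv_conjTranspose_mul_self_mul_conjTranspose {n R : Type*} [Fintype n]
    [DecidableEq n] [CommRing R] [StarRing R] {A : Matrix n n R} (hA : IsUnit A) :
    A * (Aᴴ * A)⁻¹ * Aᴴ = 1 := by
  have hA_det : IsUnit A.det := (isUnit_iff_isUnit_det A).mp hA
  have hAH_det : IsUnit Aᴴ.det := by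
    rw [det_conjTranspose]
    exact hA_det.star
  rw [mul_inv_rev, Matrix.mul_assoc, Matrix.mul_assoc, nonsing_inv_mul _ hAH_det, Matrix.mul_one,
    mul_nonsing_inv _ hA_det]

theorem rao_statistic_reduction_general
    {M L : ℕ} (ρ : ℝ)
    (X₀ : Matrix (Fin M) (Fin L) ℂ)
    (Y : Matrix (Fin M) (Fin L) ℂ) (hY : IsUnit (Y * X₀ᴴ)) :
    Matrix.trace (((1 : Matrix (Fin L) (Fin L) ℂ) - ((ρ : ℂ))⁻¹ • (X₀ᴴ * X₀))
        * Yᴴ * Y * X₀ᴴ * (X₀ * Yᴴ * Y * X₀ᴴ)⁻¹ * X₀ * Yᴴ * Y)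
      = Matrix.trace (Y * ((1 : Matrix (Fin L) (Fin L) ℂ)
        - ((ρ : ℂ))⁻¹ • (X₀ᴴ * X₀)) * Yᴴ) := by
  have hproj : Y * X₀ᴴ * (X₀ * Yᴴ * Y * X₀ᴴ)⁻¹ * (X₀ * Yᴴ) = 1 := by
    simpa only [conjTranspose_mul, conjTranspose_conjTranspose, Matrix.mul_assoc] using
      mul_inv_conjTranspose_mul_self_mul_conjTranspose hY
  rw [trace_mul_comm]
  simp only [Matrix.mul_assoc] at hproj ⊢
  rw [hproj, Matrix.mul_one]

/-- for `L ≥ M ≥ 1`, `ρ ≠ 0`, `X₀ X₀ᴴ = ρ I_M`, `N = M`, and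
`Y X₀ᴴ` invertible, the Rao statistic reduces to a quadratic form:
`tr((I_L − ρ⁻¹ X₀ᴴX₀) Yᴴ Y X₀ᴴ (X₀ Yᴴ Y X₀ᴴ)⁻¹ X₀ Yᴴ Y)
  = tr(Y (I_L − ρ⁻¹ X₀ᴴX₀) Yᴴ)`. -/
theorem rao_statistic_reduction
    {M L : ℕ} (hM : 1 ≤ M) (hML : M ≤ L) (ρ : ℝ) (hρ : ρ ≠ 0)
    (X₀ : Matrix (Fin M) (Fin L) ℂ)
    (hX₀ : X₀ * X₀ᴴ = (ρ : ℂ) • (1 : Matrix (Fin M) (Fin M) ℂ))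
    (Y : Matrix (Fin M) (Fin L) ℂ) (hY : IsUnit (Y * X₀ᴴ)) :
    Matrix.trace (((1 : Matrix (Fin L) (Fin L) ℂ) - ((ρ : ℂ))⁻¹ • (X₀ᴴ * X₀))
        * Yᴴ * Y * X₀ᴴ * (X₀ * Yᴴ * Y * X₀ᴴ)⁻¹ * X₀ * Yᴴ * Y)
      = Matrix.trace (Y * ((1 : Matrix (Fin L) (Fin L) ℂ)
        - ((ρ : ℂ))⁻¹ • (X₀ᴴ * X₀)) * Yᴴ) :=
  rao_statistic_reduction_general ρ X₀ Y hY
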